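/- For every z ∈ ℂ^N, θ ∈ ℝ, and a ∈ ℂ, writing (μ, ν) = J(z), the planar momentum map satisfies J((θ,a)·z) = (μ − ω₀(e^{iθ}ν, a) − (Σ_n Γ_n)·|a|²/2, e^{iθ}ν − (Σ_n Γ_n)·ia). In particular, the deviation of J from the coadjoint action, J((θ,a)·z) − CoAd_{(θ,a)} J(z) = −(Σ_n Γ_n)·(|a|²/2, ia), is independent of z. -/

import Mathlib

open Complex Finset

/-- `ω₀(a,b) = -Im(a·conj(b))`. -/
noncomputable def om0 (a b : ℂ) : ℝ := -(a * (starRingEnd ℂ) b).im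

/-- The planar momentum map `J(z) = (-∑ Γₙ|zₙ|²/2, -∑ Γₙ i zₙ) ∈ ℝ × ℂ`. -/
noncomputable def Jpl {N : ℕ} (Γ : Fin N → ℝ) (z : Fin N → ℂ) : ℝ × ℂ :=
  (-∑ n, Γ n * ‖z n‖ ^ 2 / 2, -∑ n, (Γ n : ℂ) * (Complex.I * z n))

/-- The diagonal action of `SE(2)` on `ℂᴺ`: `(θ,a)·z = (e^{iθ}zₙ + a)ₙ`. -/
noncomputable def se2Act {N : ℕ} (θ : ℝ) (a : ℂ) (z : Fin N → ℂ) : Fin N → ℂ :=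
  fun n => Complex.exp (Complex.I * θ) * z n + a

/-- The coadjoint action of `SE(2)` on `ℝ × ℂ ≅ se(2)*`. -/
noncomputable def coAd (θ : ℝ) (a : ℂ) (μν : ℝ × ℂ) : ℝ × ℂ :=
  (μν.1 - om0 (Complex.exp (Complex.I * θ) * μν.2) a, Complex.exp (Complex.I * θ) * μν.2)

/-- Transformation law of the planar momentum map under `SE(2)`, and the resulting cocycle
`J((θ,a)·z) - CoAd_{(θ,a)}J(z) = -(∑ Γₙ)·(|a|²/2, ia)`, independent of `z`. -/
theorem Jpl_transform {N : ℕ} (Γ : Fin N → ℝ) (z : Fin N → ℂ) (θ : ℝ) (a : ℂ) :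
    Jpl Γ (se2Act θ a z)
      = ((Jpl Γ z).1 - om0 (Complex.exp (Complex.I * θ) * (Jpl Γ z).2) a
            - (∑ n, Γ n) * ‖a‖ ^ 2 / 2,
         Complex.exp (Complex.I * θ) * (Jpl Γ z).2 - ((∑ n, Γ n) : ℂ) * (Complex.I * a)) ∧
    Jpl Γ (se2Act θ a z) - coAd θ a (Jpl Γ z)
      = (-((∑ n, Γ n) * ‖a‖ ^ 2 / 2), -(((∑ n, Γ n) : ℂ) * (Complex.I * a))) := by
  have hnsq : Complex.normSq (Complex.exp (Complex.I * θ)) = 1 := by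
    rw [← Complex.sq_norm, Complex.norm_exp]
    simp [Complex.mul_re]
  have h1 : ∀ n : Fin N, Γ n * ‖Complex.exp (Complex.I * θ) * z n + a‖ ^ 2 / 2
      = Γ n * ‖z n‖ ^ 2 / 2
        + (Complex.exp (Complex.I * θ) * ((Γ n : ℂ) * (Complex.I * z n))
            * (starRingEnd ℂ) a).im
        + Γ n * ‖a‖ ^ 2 / 2 := by
    intro n
    rw [Complex.sq_norm, Complex.sq_norm, Complex.sq_norm, Complex.normSq_add,
      Complex.normSq_mul, hnsq, one_mul]
    simp [Complex.mul_im, Complex.mul_re, Complex.normSq_apply]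
    ring
  have h2 : (Complex.exp (Complex.I * θ) * (-∑ n, (Γ n : ℂ) * (Complex.I * z n))
        * (starRingEnd ℂ) a).im
      = -∑ n, (Complex.exp (Complex.I * θ) * ((Γ n : ℂ) * (Complex.I * z n))
          * (starRingEnd ℂ) a).im := by
    simp [Finset.mul_sum, Finset.sum_mul, Complex.im_sum]
  have hmain : Jpl Γ (se2Act θ a z)
      = ((Jpl Γ z).1 - om0 (Complex.exp (Complex.I * θ) * (Jpl Γ z).2) a
            - (∑ n, Γ n) * ‖a‖ ^ 2 / 2,
         Complex.exp (Complex.I * θ) * (Jpl Γ z).2 - ((∑ n, Γ n) : ℂ) * (Complex.I * a)) := by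
    refine Prod.ext ?_ ?_
    · show -∑ n, Γ n * ‖Complex.exp (Complex.I * θ) * z n + a‖ ^ 2 / 2 = _
      rw [Finset.sum_congr rfl fun n _ => h1 n, Finset.sum_add_distrib,
        Finset.sum_add_distrib]
      simp only [Jpl, om0]
      have h3 : ∑ n, Γ n * ‖a‖ ^ 2 / 2 = (∑ n, Γ n) * ‖a‖ ^ 2 / 2 := by
        rw [← Finset.sum_div, ← Finset.sum_mul]
      rw [h2, h3]
      ring
    · show -∑ n, (Γ n : ℂ) * (Complex.I * (Complex.exp (Complex.I * θ) * z n + a)) = _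
      simp only [Jpl, mul_neg, Finset.mul_sum, Finset.sum_mul, neg_neg]
      rw [sub_eq_add_neg, ← Finset.sum_neg_distrib, ← Finset.sum_neg_distrib, ← Finset.sum_neg_distrib,
        ← Finset.sum_add_distrib]
      exact Finset.sum_congr rfl fun n _ => by ring
  refine ⟨hmain, ?_⟩
  rw [hmain]
  simp only [coAd, Prod.mk_sub_mk, Prod.mk.injEq]
  constructor <;> ring
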